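/- Let ρ : [T0,T] → ℝ be a non-negative absolutely continuous function and let b1, b2, a : [T0,T] → ℝ₊ be non-negative Lebesgue integrable functions. Assume that ρ'(t) ≤ a(t) + b1(t)·ρ(t) + b2(t)·∫_{T0}^t ρ(s) ds for almost every t ∈ [T0,T]. Then for all t ∈ [T0,T] one has ρ(t) ≤ ρ(T0)·exp(∫_{T0}^t (b(τ)+1) dτ) + ∫_{T0}^t a(s)·exp(∫_s^t (b(τ)+1) dτ) ds, where b(t) := max{b1(t), b2(t)} for almost every t ∈ [T0,T]. -/

import Mathlib

/-! Put `R = ρ + ∫_{T0}^· ρ` and `b = max b1 b2`. Because `ρ ≥ 0` and `∫ ρ ≥ 0`, the hypothesis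
gives `ρ' + ρ ≤ a + (b + 1) R` a.e., hence the linear integral inequality
`R ≤ ρ(T0) + ∫_{T0}^· (a + (b + 1) R)`. It is resolved by the integrating factor `e^{-B}`,
`B = ∫_{T0}^· (b + 1)`: the right-hand side `W` satisfies `W' ≤ a + (b + 1) W` a.e., so the
absolutely continuous function `e^{-B} W` has derivative at most `a e^{-B}`, and integrating it
bounds `W ≥ R ≥ ρ`. -/

open MeasureTheory Set Filter intervalIntegral
open scoped NNReal

section AbsolutelyContinuous

variable {a b : ℝ}

theorem LipschitzOnWith.comp_absolutelyContinuousOnInterval {X Y : Type*} [PseudoMetricSpace X]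
    [PseudoMetricSpace Y] {g : X → Y} {f : ℝ → X} {K : ℝ≥0} {s : Set X}
    (hg : LipschitzOnWith K g s) (hf : AbsolutelyContinuousOnInterval f a b)
    (hfs : MapsTo f (uIcc a b) s) : AbsolutelyContinuousOnInterval (g ∘ f) a b := by
  unfold AbsolutelyContinuousOnInterval at hf ⊢
  refine squeeze_zero' ?_ ?_ (by simpa using hf.const_mul (K : ℝ))
  · exact .of_forall fun _ => Finset.sum_nonneg fun _ _ => dist_nonneg
  rw [eventually_inf_principal]
  filter_upwards with ⟨n, I⟩ hnI
  rw [Finset.mul_sum]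
  gcongr with i hi
  exact hg.dist_le_mul _ (hfs (hnI.1 i hi).1) _ (hfs (hnI.1 i hi).2)

theorem LocallyLipschitz.comp_absolutelyContinuousOnInterval {F Y : Type*}
    [SeminormedAddCommGroup F] [PseudoMetricSpace Y] {g : F → Y} {f : ℝ → F}
    (hg : LocallyLipschitz g) (hf : AbsolutelyContinuousOnInterval f a b) :
    AbsolutelyContinuousOnInterval (g ∘ f) a b := by
  obtain ⟨K, hK⟩ := hg.locallyLipschitzOn.exists_lipschitzOnWith_of_compact
    (isCompact_uIcc.image_of_continuousOn hf.continuousOn)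
  exact hK.comp_absolutelyContinuousOnInterval hf (mapsTo_image f _)

theorem AbsolutelyContinuousOnInterval.const_add {f : ℝ → ℝ} (c : ℝ)
    (hf : AbsolutelyContinuousOnInterval f a b) :
    AbsolutelyContinuousOnInterval (fun x => c + f x) a b := by
  simpa [AbsolutelyContinuousOnInterval] using hf

theorem AbsolutelyContinuousOnInterval.sub_le_integral_of_ae_deriv_le {f g : ℝ → ℝ} (hab : a ≤ b)
    (hf : AbsolutelyContinuousOnInterval f a b) (hg : IntervalIntegrable g volume a b)
    (hfg : ∀ᵐ t, t ∈ Icc a b → deriv f t ≤ g t) : f b - f a ≤ ∫ t in a..b, g t :=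
  hf.integral_deriv_eq_sub ▸ integral_mono_ae_restrict hab hf.intervalIntegrable_deriv hg
    ((ae_restrict_iff' measurableSet_Icc).2 hfg)

end AbsolutelyContinuous

theorem le_mul_exp_add_integral_of_le_add_integral {α β R : ℝ → ℝ} {a b c : ℝ} (hab : a ≤ b)
    (hα : IntervalIntegrable α volume a b) (hβ : IntervalIntegrable β volume a b)
    (hβnn : ∀ t ∈ Icc a b, 0 ≤ β t) (hR : ContinuousOn R (Icc a b))
    (hle : ∀ t ∈ Icc a b, R t ≤ c + ∫ s in a..t, (α s + β s * R s)) :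
    R b ≤ c * Real.exp (∫ s in a..b, β s) + ∫ s in a..b, α s * Real.exp (∫ τ in s..b, β τ) := by
  set B : ℝ → ℝ := fun t => ∫ s in a..t, β s
  set W : ℝ → ℝ := fun t => c + ∫ s in a..t, (α s + β s * R s)
  rw [← uIcc_of_le hab] at hR
  have hg : IntervalIntegrable (fun s => α s + β s * R s) volume a b :=
    hα.add (hβ.mul_continuousOn hR)
  have hB : AbsolutelyContinuousOnInterval B a b :=
    hβ.absolutelyContinuousOnInterval_intervalIntegral left_mem_uIcc
  have hW : AbsolutelyContinuousOnInterval W a b :=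
    (hg.absolutelyContinuousOnInterval_intervalIntegral left_mem_uIcc).const_add c
  have hE : AbsolutelyContinuousOnInterval (fun t => Real.exp (-B t)) a b :=
    Real.contDiff_exp.locallyLipschitz.comp_absolutelyContinuousOnInterval hB.fun_neg
  have hderiv : ∀ᵐ t, t ∈ Icc a b →
      deriv (fun t => Real.exp (-B t) * W t) t ≤ α t * Real.exp (-B t) := by
    filter_upwards [hβ.ae_hasDerivAt_integral, hg.ae_hasDerivAt_integral] with t hBt hWt ht
    have ht' := Icc_subset_uIcc ht
    have hVt : HasDerivAt (fun t => Real.exp (-B t) * W t)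
        (Real.exp (-B t) * -β t * W t + Real.exp (-B t) * (α t + β t * R t)) t :=
      (hBt ht' a left_mem_uIcc).fun_neg.exp.mul ((hWt ht' a left_mem_uIcc).const_add c)
    rw [hVt.deriv]
    have : 0 ≤ Real.exp (-B t) * β t * (W t - R t) :=
      mul_nonneg (mul_nonneg (Real.exp_pos _).le (hβnn t ht)) (sub_nonneg.2 (hle t ht))
    linarith
  have hEW : Real.exp (-B b) * W b ≤ c + ∫ t in a..b, α t * Real.exp (-B t) := by
    have := (hE.fun_mul hW).sub_le_integral_of_ae_deriv_le hab
      (hα.mul_continuousOn hE.continuousOn) hderiv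
    simp only [B, W, integral_same, neg_zero, Real.exp_zero, add_zero, one_mul] at this
    linarith
  have hexp : ∀ s ∈ uIcc a b, α s * Real.exp (∫ τ in s..b, β τ)
      = Real.exp (B b) * (α s * Real.exp (-B s)) := by
    intro s hs
    rw [← integral_interval_sub_left hβ (hβ.mono_set (uIcc_subset_uIcc_left hs)), sub_eq_add_neg,
      Real.exp_add]
    ring
  calc R b ≤ W b := hle b (right_mem_Icc.2 hab)
    _ = Real.exp (B b) * (Real.exp (-B b) * W b) := by
      rw [← mul_assoc, ← Real.exp_add, add_neg_cancel, Real.exp_zero, one_mul]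
    _ ≤ Real.exp (B b) * (c + ∫ t in a..b, α t * Real.exp (-B t)) := by gcongr
    _ = _ := by rw [integral_congr hexp, intervalIntegral.integral_const_mul]; ring

theorem IntervalIntegrable.max {f g : ℝ → ℝ} {a b : ℝ}
    (hf : IntervalIntegrable f volume a b) (hg : IntervalIntegrable g volume a b) :
    IntervalIntegrable (fun s => max (f s) (g s)) volume a b :=
  ⟨hf.1.sup hg.1, hf.2.sup hg.2⟩

section Reduction

variable {ρ ρ' : ℝ → ℝ} {t₀ t₁ : ℝ}

theorem continuousOn_of_eq_add_integral (ht : t₀ ≤ t₁) (hρ' : IntervalIntegrable ρ' volume t₀ t₁)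
    (hρ : ∀ t ∈ Icc t₀ t₁, ρ t = ρ t₀ + ∫ s in t₀..t, ρ' s) : ContinuousOn ρ (Icc t₀ t₁) := by
  have := (continuousOn_primitive_interval' hρ' left_mem_uIcc).const_add (ρ t₀)
  rw [uIcc_of_le ht] at this
  exact this.congr hρ

theorem ContinuousOn.add_integral (ht : t₀ ≤ t₁) (hρ : ContinuousOn ρ (Icc t₀ t₁)) :
    ContinuousOn (fun t => ρ t + ∫ s in t₀..t, ρ s) (Icc t₀ t₁) := by
  have := continuousOn_primitive_interval' (hρ.intervalIntegrable_of_Icc (μ := volume) ht)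
    left_mem_uIcc
  rw [uIcc_of_le ht] at this
  exact hρ.add this

theorem add_integral_le_of_ae_deriv_le {a b1 b2 : ℝ → ℝ} (ht : t₀ ≤ t₁)
    (hρnn : ∀ t ∈ Icc t₀ t₁, 0 ≤ ρ t) (hρ' : IntervalIntegrable ρ' volume t₀ t₁)
    (hρAC : ∀ t ∈ Icc t₀ t₁, ρ t = ρ t₀ + ∫ s in t₀..t, ρ' s)
    (ha : IntervalIntegrable a volume t₀ t₁) (hb1 : IntervalIntegrable b1 volume t₀ t₁)
    (hb2 : IntervalIntegrable b2 volume t₀ t₁)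
    (hineq : ∀ᵐ t ∂volume, t ∈ Icc t₀ t₁ →
      ρ' t ≤ a t + b1 t * ρ t + b2 t * ∫ s in t₀..t, ρ s) :
    ∀ t ∈ Icc t₀ t₁, ρ t + ∫ s in t₀..t, ρ s ≤
      ρ t₀ + ∫ s in t₀..t, (a s + (max (b1 s) (b2 s) + 1) * (ρ s + ∫ u in t₀..s, ρ u)) := by
  have hρc := continuousOn_of_eq_add_integral ht hρ' hρAC
  have hg : IntervalIntegrable
      (fun s => a s + (max (b1 s) (b2 s) + 1) * (ρ s + ∫ u in t₀..s, ρ u)) volume t₀ t₁ :=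
    ha.add (((hb1.max hb2).add intervalIntegrable_const).mul_continuousOn
      (by rw [uIcc_of_le ht]; exact hρc.add_integral ht))
  intro t ht
  have hsub : uIcc t₀ t ⊆ uIcc t₀ t₁ := uIcc_subset_uIcc_left (Icc_subset_uIcc ht)
  have hρt : IntervalIntegrable ρ volume t₀ t :=
    (hρc.mono (Icc_subset_Icc_right ht.2)).intervalIntegrable_of_Icc ht.1
  rw [hρAC t ht, add_assoc, ← integral_add (hρ'.mono_set hsub) hρt]
  refine add_le_add_right (integral_mono_ae_restrict ht.1 ((hρ'.mono_set hsub).add hρt)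
    (hg.mono_set hsub) ?_) _
  rw [Filter.EventuallyLE, ae_restrict_iff' measurableSet_Icc]
  filter_upwards [hineq] with s hs hst
  have hsI : s ∈ Icc t₀ t₁ := Icc_subset_Icc_right ht.2 hst
  have hρs := hρnn s hsI
  have hIs : 0 ≤ ∫ u in t₀..s, ρ u :=
    integral_nonneg hst.1 fun u hu => hρnn u ⟨hu.1, hu.2.trans hsI.2⟩
  nlinarith [hs hsI, mul_le_mul_of_nonneg_right (le_max_left (b1 s) (b2 s)) hρs,
    mul_le_mul_of_nonneg_right (le_max_right (b1 s) (b2 s)) hIs]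

end Reduction

theorem gronwall_integral_inequality (T0 T : ℝ)
    (ρ ρ' a b1 b2 : ℝ → ℝ)
    (hρnn : ∀ t ∈ Icc T0 T, 0 ≤ ρ t)
    (hρint : IntervalIntegrable ρ' volume T0 T)
    (hρAC : ∀ t ∈ Icc T0 T, ρ t = ρ T0 + ∫ s in T0..t, ρ' s)
    (haint : IntervalIntegrable a volume T0 T)
    (hb1int : IntervalIntegrable b1 volume T0 T) (hb1nn : ∀ t ∈ Icc T0 T, 0 ≤ b1 t)
    (hb2int : IntervalIntegrable b2 volume T0 T)
    (hineq : ∀ᵐ t ∂volume, t ∈ Icc T0 T →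
      ρ' t ≤ a t + b1 t * ρ t + b2 t * ∫ s in T0..t, ρ s) :
    ∀ t ∈ Icc T0 T,
      ρ t ≤ ρ T0 * Real.exp (∫ τ in T0..t, (max (b1 τ) (b2 τ) + 1)) +
        ∫ s in T0..t, a s * Real.exp (∫ τ in s..t, (max (b1 τ) (b2 τ) + 1)) := by
  intro t ht
  have hT0T : T0 ≤ T := ht.1.trans ht.2
  have hsub : Icc T0 t ⊆ Icc T0 T := Icc_subset_Icc_right ht.2
  have hsub' : uIcc T0 t ⊆ uIcc T0 T := uIcc_subset_uIcc_left (Icc_subset_uIcc ht)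
  have hR := (continuousOn_of_eq_add_integral hT0T hρint hρAC).add_integral hT0T
  calc ρ t ≤ ρ t + ∫ s in T0..t, ρ s :=
        le_add_of_nonneg_right (integral_nonneg ht.1 fun s hs => hρnn s (hsub hs))
    _ ≤ _ := le_mul_exp_add_integral_of_le_add_integral (R := fun u => ρ u + ∫ s in T0..u, ρ s)
        ht.1 (haint.mono_set hsub')
        (((hb1int.max hb2int).add intervalIntegrable_const).mono_set hsub')
        (fun s hs => by linarith [hb1nn s (hsub hs), le_max_left (b1 s) (b2 s)])
        (hR.mono hsub)
        fun u hu => add_integral_le_of_ae_deriv_le hT0T hρnn hρint hρAC haint hb1int hb2int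
          hineq u (hsub hu)
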